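/- Let Z be an ℝᵖ-valued random vector with E|Z|² < ∞ and let E_c ⊆ ℝᵖ be a subspace with orthogonal projector P_c satisfying the linearity condition E[Z | P_c Z] = P_c Z almost surely. Then for any bounded measurable g : ℝᵖ → ℝ that is σ(P_c Z)-measurable, E[(I − P_c)Z · g(P_c Z)] = 0; in particular, if additionally Y is σ(P_c Z)-conditionally determined in the sense that P(Y ∈ A | Z) = P(Y ∈ A | P_c Z) for all Borel A, then E[Z·1{Y ≤ t}] ∈ E_c for every t ∈ ℝ. -/

import Mathlib

open MeasureTheory

set_option maxHeartbeats 1000000 in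
set_option linter.unnecessarySimpa false in
/-- Li's characterization: under the linearity condition `E[Z | P_c Z] = P_c Z`,
`E[(I−P_c)Z · g(P_c Z)] = 0` for bounded measurable `g`; and if moreover the
conditional law of `Y` given `Z` only depends on `P_c Z`, then
`E[Z·1{Y ≤ t}] ∈ E_c` for every `t`. -/
theorem li_characterization_indicators
    {Ω : Type*} [MeasurableSpace Ω] (P : Measure Ω) [IsProbabilityMeasure P]
    {p : ℕ} (Z : Ω → EuclideanSpace ℝ (Fin p)) (hZmeas : Measurable Z)
    (hZ2 : MemLp Z 2 P)
    (E_c : Submodule ℝ (EuclideanSpace ℝ (Fin p)))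
    (PcZ : Ω → EuclideanSpace ℝ (Fin p))
    (hPcZ : ∀ ω, PcZ ω = (E_c.orthogonalProjectionOnto (Z ω) : EuclideanSpace ℝ (Fin p)))
    (hLC : P[Z | MeasurableSpace.comap PcZ
        (inferInstance : MeasurableSpace (EuclideanSpace ℝ (Fin p)))] =ᵐ[P] PcZ)
    (Y : Ω → ℝ) (hY : Measurable Y) :
    (∀ g : EuclideanSpace ℝ (Fin p) → ℝ, Measurable g → (∃ C : ℝ, ∀ x, |g x| ≤ C) →
      ∫ ω, g (PcZ ω) • (Z ω - PcZ ω) ∂P = 0) ∧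
    ((∀ A : Set ℝ, MeasurableSet A →
        P[(fun ω => A.indicator (fun _ => (1 : ℝ)) (Y ω)) |
            MeasurableSpace.comap Z
              (inferInstance : MeasurableSpace (EuclideanSpace ℝ (Fin p)))]
          =ᵐ[P]
        P[(fun ω => A.indicator (fun _ => (1 : ℝ)) (Y ω)) |
            MeasurableSpace.comap PcZ
              (inferInstance : MeasurableSpace (EuclideanSpace ℝ (Fin p)))]) →
      ∀ t : ℝ, (∫ ω, (if Y ω ≤ t then Z ω else 0) ∂P) ∈ E_c) := by
  classical
  -- coordinate bound
  have coord_le : ∀ (v : EuclideanSpace ℝ (Fin p)) (i : Fin p), |v i| ≤ ‖v‖ := by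
    intro v i
    have := abs_real_inner_le_norm (EuclideanSpace.single i (1 : ℝ)) v
    simpa [EuclideanSpace.inner_single_left, EuclideanSpace.norm_single] using this
  have hproj_le : ∀ v : EuclideanSpace ℝ (Fin p),
      ‖(E_c.orthogonalProjectionOnto v : EuclideanSpace ℝ (Fin p))‖ ≤ ‖v‖ := by
    intro v
    calc ‖(E_c.orthogonalProjectionOnto v : EuclideanSpace ℝ (Fin p))‖
        = ‖E_c.orthogonalProjectionOnto v‖ := rfl
      _ ≤ ‖E_c.orthogonalProjectionOnto‖ * ‖v‖ := E_c.orthogonalProjectionOnto.le_opNorm v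
      _ ≤ 1 * ‖v‖ := by gcongr; exact Submodule.orthogonalProjectionOnto_norm_le _
      _ = ‖v‖ := one_mul _
  have hPcZfun : PcZ = fun ω => (E_c.subtypeL.comp E_c.orthogonalProjectionOnto) (Z ω) :=
    funext fun ω => hPcZ ω
  -- ambient measurability facts (before introducing sub-σ-algebras)
  have hPcZmeas : Measurable PcZ := by
    rw [hPcZfun]
    exact (ContinuousLinearMap.continuous _).measurable.comp hZmeas
  have hZi_meas : ∀ i : Fin p, Measurable fun ω => Z ω i := fun i =>
    ((EuclideanSpace.proj (𝕜 := ℝ) i).continuous.measurable).comp hZmeas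
  have hPcZi_meas : ∀ i : Fin p, Measurable fun ω => PcZ ω i := fun i =>
    ((EuclideanSpace.proj (𝕜 := ℝ) i).continuous.measurable).comp hPcZmeas
  have hFmeas : ∀ t : ℝ, Measurable fun ω => if Y ω ≤ t then (1 : ℝ) else 0 := fun t =>
    Measurable.ite (measurableSet_le hY measurable_const) measurable_const measurable_const
  have hm : (MeasurableSpace.comap PcZ (inferInstance : MeasurableSpace (EuclideanSpace ℝ (Fin p)))) ≤ ‹MeasurableSpace Ω› := hPcZmeas.comap_le
  have hmZle : (MeasurableSpace.comap Z (inferInstance : MeasurableSpace (EuclideanSpace ℝ (Fin p)))) ≤ ‹MeasurableSpace Ω› := hZmeas.comap_le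
  have hZ1 : Integrable Z P := hZ2.integrable one_le_two
  have hZae : AEStronglyMeasurable Z P := hZ1.aestronglyMeasurable
  have hPcZ_nle : ∀ ω, ‖PcZ ω‖ ≤ ‖Z ω‖ := fun ω => by rw [hPcZ ω]; exact hproj_le _
  have hPcZ_int : Integrable PcZ P :=
    Integrable.mono' hZ1.norm hPcZmeas.aestronglyMeasurable (ae_of_all _ hPcZ_nle)
  have hZi_int : ∀ i : Fin p, Integrable (fun ω => Z ω i) P := fun i =>
    Integrable.mono' hZ1.norm (hZi_meas i).aestronglyMeasurable
      (ae_of_all _ fun ω => by simpa [Real.norm_eq_abs] using coord_le (Z ω) i)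
  have hPcZi_int : ∀ i : Fin p, Integrable (fun ω => PcZ ω i) P := fun i =>
    Integrable.mono' hZ1.norm (hPcZi_meas i).aestronglyMeasurable
      (ae_of_all _ fun ω => by
        simpa [Real.norm_eq_abs] using (coord_le (PcZ ω) i).trans (hPcZ_nle ω))
  have hm_meas_PcZ : Measurable[(MeasurableSpace.comap PcZ (inferInstance : MeasurableSpace (EuclideanSpace ℝ (Fin p))))] PcZ := Measurable.of_comap_le le_rfl
  have hmZ_meas_Z : Measurable[(MeasurableSpace.comap Z (inferInstance : MeasurableSpace (EuclideanSpace ℝ (Fin p))))] Z := Measurable.of_comap_le le_rfl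
  -- coordinates of `PcZ` are the conditional expectations of coordinates of `Z`
  have hZi_cond : ∀ i : Fin p, P[(fun ω => Z ω i)|(MeasurableSpace.comap PcZ (inferInstance : MeasurableSpace (EuclideanSpace ℝ (Fin p))))] =ᵐ[P] fun ω => PcZ ω i := by
    intro i
    refine (ae_eq_condExp_of_forall_setIntegral_eq hm (hZi_int i)
      (fun s _ _ => (hPcZi_int i).integrableOn) (fun s hs _ => ?_) ?_).symm
    · have hset : ∫ ω in s, PcZ ω ∂P = ∫ ω in s, Z ω ∂P := by
        rw [← setIntegral_condExp hm hZ1 hs]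
        exact integral_congr_ae (ae_restrict_of_ae hLC.symm)
      have h1 := (EuclideanSpace.proj (𝕜 := ℝ) i).integral_comp_comm
        (hPcZ_int.integrableOn (s := s))
      have h2 := (EuclideanSpace.proj (𝕜 := ℝ) i).integral_comp_comm
        (hZ1.integrableOn (s := s))
      have h3 : ∫ x in s, (EuclideanSpace.proj (𝕜 := ℝ) i) (PcZ x) ∂P
          = ∫ x in s, (EuclideanSpace.proj (𝕜 := ℝ) i) (Z x) ∂P := by
        rw [h1, h2, hset]
      simpa using h3
    · exact (((EuclideanSpace.proj (𝕜 := ℝ) i).continuous.measurable.comp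
        hm_meas_PcZ).stronglyMeasurable).aestronglyMeasurable
  -- key lemma
  have key : ∀ (h : Ω → ℝ) (C : ℝ), StronglyMeasurable[(MeasurableSpace.comap PcZ (inferInstance : MeasurableSpace (EuclideanSpace ℝ (Fin p))))] h → (∀ᵐ ω ∂P, |h ω| ≤ C) →
      ∫ ω, h ω • (Z ω - PcZ ω) ∂P = 0 := by
    intro h C hsm hbd
    have hhs : AEStronglyMeasurable h P := (hsm.mono hm).aestronglyMeasurable
    have hint1 : ∀ i : Fin p, Integrable (fun ω => h ω * Z ω i) P := by
      intro i
      refine Integrable.mono' (hZ1.norm.const_mul C) (hhs.mul (hZi_meas i).aestronglyMeasurable) ?_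
      filter_upwards [hbd] with ω hω
      rw [Real.norm_eq_abs, abs_mul]
      exact mul_le_mul hω (coord_le (Z ω) i) (abs_nonneg _) ((abs_nonneg _).trans hω)
    have hint2 : ∀ i : Fin p, Integrable (fun ω => h ω * PcZ ω i) P := by
      intro i
      refine Integrable.mono' (hZ1.norm.const_mul C)
        (hhs.mul (hPcZi_meas i).aestronglyMeasurable) ?_
      filter_upwards [hbd] with ω hω
      rw [Real.norm_eq_abs, abs_mul]
      exact mul_le_mul hω ((coord_le (PcZ ω) i).trans (hPcZ_nle ω)) (abs_nonneg _)
        ((abs_nonneg _).trans hω)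
    have hW_int : Integrable (fun ω => h ω • (Z ω - PcZ ω)) P := by
      refine Integrable.mono' ((hZ1.norm.const_mul C).add (hZ1.norm.const_mul C))
        (hhs.smul (hZae.sub hPcZmeas.aestronglyMeasurable)) ?_
      filter_upwards [hbd] with ω hω
      rw [norm_smul, Real.norm_eq_abs]
      calc |h ω| * ‖Z ω - PcZ ω‖ ≤ C * (‖Z ω‖ + ‖PcZ ω‖) :=
            mul_le_mul hω (norm_sub_le _ _) (norm_nonneg _) ((abs_nonneg _).trans hω)
        _ ≤ C * ‖Z ω‖ + C * ‖Z ω‖ := by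
            rw [mul_add]
            gcongr
            exacts [(abs_nonneg (h ω)).trans hω, hPcZ_nle ω]
    -- coordinatewise computation
    have hcoordeq : ∀ i : Fin p, ∫ ω, h ω * Z ω i ∂P = ∫ ω, h ω * PcZ ω i ∂P := by
      intro i
      have hpull : P[(fun ω => h ω * Z ω i)|(MeasurableSpace.comap PcZ (inferInstance : MeasurableSpace (EuclideanSpace ℝ (Fin p))))] =ᵐ[P] fun ω => h ω * (P[(fun ω => Z ω i)|(MeasurableSpace.comap PcZ (inferInstance : MeasurableSpace (EuclideanSpace ℝ (Fin p))))]) ω :=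
        condExp_mul_of_stronglyMeasurable_left hsm (hint1 i) (hZi_int i)
      calc ∫ ω, h ω * Z ω i ∂P = ∫ ω, (P[(fun ω => h ω * Z ω i)|(MeasurableSpace.comap PcZ (inferInstance : MeasurableSpace (EuclideanSpace ℝ (Fin p))))]) ω ∂P :=
            (integral_condExp hm).symm
        _ = ∫ ω, h ω * PcZ ω i ∂P := by
            refine integral_congr_ae (hpull.trans ?_)
            filter_upwards [hZi_cond i] with ω hω
            rw [hω]
    apply PiLp.ext
    intro i
    have hWi := (EuclideanSpace.proj (𝕜 := ℝ) i).integral_comp_comm hW_int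
    have hWi' : (∫ ω, h ω • (Z ω - PcZ ω) ∂P) i = ∫ ω, h ω * (Z ω i - PcZ ω i) ∂P := by
      simpa [smul_eq_mul] using hWi.symm
    have : ∫ ω, h ω * (Z ω i - PcZ ω i) ∂P = 0 := by
      have he : (fun ω => h ω * (Z ω i - PcZ ω i)) =
          fun ω => h ω * Z ω i - h ω * PcZ ω i := funext fun ω => mul_sub _ _ _
      rw [he, integral_sub (hint1 i) (hint2 i), hcoordeq i, sub_self]
    rw [hWi', this]
    rfl
  refine ⟨?_, ?_⟩
  · rintro g hg ⟨C, hC⟩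
    exact key (fun ω => g (PcZ ω)) C
      ((hg.comp hm_meas_PcZ).stronglyMeasurable) (ae_of_all _ fun ω => hC _)
  · intro hcondY t
    have hF01 : ∀ ω, 0 ≤ (if Y ω ≤ t then (1:ℝ) else 0) ∧ (if Y ω ≤ t then (1:ℝ) else 0) ≤ 1 := by
      intro ω; by_cases h : Y ω ≤ t <;> simp [h]
    have hFabs : ∀ ω, |if Y ω ≤ t then (1:ℝ) else 0| ≤ 1 := fun ω => by
      rw [abs_le]; exact ⟨by linarith [(hF01 ω).1], (hF01 ω).2⟩
    have hFint : Integrable (fun ω => if Y ω ≤ t then (1:ℝ) else 0) P := by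
      refine Integrable.mono' (integrable_const (1:ℝ)) ((hFmeas t).aestronglyMeasurable) ?_
      exact ae_of_all _ fun ω => by simpa [Real.norm_eq_abs] using hFabs ω
    have hcond := hcondY (Set.Iic t) measurableSet_Iic
    have hind : (fun ω => (Set.Iic t).indicator (fun _ => (1:ℝ)) (Y ω))
        = fun ω => if Y ω ≤ t then (1:ℝ) else 0 := funext fun ω => by
      by_cases h : Y ω ≤ t <;> simp [Set.indicator_apply, Set.mem_Iic, h]
    rw [hind] at hcond
    -- bound on the conditional expectation
    have h0 : 0 ≤ᵐ[P] P[(fun ω => if Y ω ≤ t then (1:ℝ) else 0)|(MeasurableSpace.comap PcZ (inferInstance : MeasurableSpace (EuclideanSpace ℝ (Fin p))))] :=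
      condExp_nonneg (ae_of_all _ fun ω => (hF01 ω).1)
    have h1le : P[(fun ω => if Y ω ≤ t then (1:ℝ) else 0)|(MeasurableSpace.comap PcZ (inferInstance : MeasurableSpace (EuclideanSpace ℝ (Fin p))))] ≤ᵐ[P] fun _ => (1:ℝ) := by
      have := condExp_mono (μ := P) (m := (MeasurableSpace.comap PcZ (inferInstance : MeasurableSpace (EuclideanSpace ℝ (Fin p)))))
        hFint (integrable_const (1:ℝ)) (ae_of_all _ fun ω => (hF01 ω).2)
      rwa [condExp_const hm (1:ℝ)] at this
    have hbd : ∀ᵐ ω ∂P, |(P[(fun ω => if Y ω ≤ t then (1:ℝ) else 0)|(MeasurableSpace.comap PcZ (inferInstance : MeasurableSpace (EuclideanSpace ℝ (Fin p))))]) ω| ≤ 1 := by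
      filter_upwards [h0, h1le] with ω ha hb
      rw [abs_le]; exact ⟨by simpa using le_trans (by norm_num) ha, hb⟩
    have hkey0 : ∫ ω, (P[(fun ω => if Y ω ≤ t then (1:ℝ) else 0)|(MeasurableSpace.comap PcZ (inferInstance : MeasurableSpace (EuclideanSpace ℝ (Fin p))))]) ω • (Z ω - PcZ ω) ∂P = 0 :=
      key _ 1 stronglyMeasurable_condExp hbd
    have hhs : AEStronglyMeasurable (P[(fun ω => if Y ω ≤ t then (1:ℝ) else 0)|(MeasurableSpace.comap PcZ (inferInstance : MeasurableSpace (EuclideanSpace ℝ (Fin p))))]) P :=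
      (stronglyMeasurable_condExp.mono hm).aestronglyMeasurable
    have hFV_int : Integrable (fun ω => (if Y ω ≤ t then (1:ℝ) else 0) • (Z ω - PcZ ω)) P := by
      refine Integrable.mono' (hZ1.norm.add hZ1.norm)
        (((hFmeas t).aestronglyMeasurable).smul (hZae.sub hPcZmeas.aestronglyMeasurable)) ?_
      refine ae_of_all _ fun ω => ?_
      rw [norm_smul, Real.norm_eq_abs]
      calc |if Y ω ≤ t then (1:ℝ) else 0| * ‖Z ω - PcZ ω‖ ≤ 1 * (‖Z ω‖ + ‖PcZ ω‖) :=
            mul_le_mul (hFabs ω) (norm_sub_le _ _) (norm_nonneg _) zero_le_one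
        _ ≤ ‖Z ω‖ + ‖Z ω‖ := by rw [one_mul]; gcongr; exact hPcZ_nle ω
    have hhV_int : Integrable
        (fun ω => (P[(fun ω => if Y ω ≤ t then (1:ℝ) else 0)|(MeasurableSpace.comap PcZ (inferInstance : MeasurableSpace (EuclideanSpace ℝ (Fin p))))]) ω • (Z ω - PcZ ω)) P := by
      refine Integrable.mono' (hZ1.norm.add hZ1.norm)
        (hhs.smul (hZae.sub hPcZmeas.aestronglyMeasurable)) ?_
      filter_upwards [hbd] with ω hω
      rw [norm_smul, Real.norm_eq_abs]
      calc _ ≤ 1 * (‖Z ω‖ + ‖PcZ ω‖) :=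
            mul_le_mul hω (norm_sub_le _ _) (norm_nonneg _) zero_le_one
        _ ≤ ‖Z ω‖ + ‖Z ω‖ := by rw [one_mul]; gcongr; exact hPcZ_nle ω
    -- the integral against F agrees with the integral against the conditional expectation
    have hFVeq : ∫ ω, (if Y ω ≤ t then (1:ℝ) else 0) • (Z ω - PcZ ω) ∂P
        = ∫ ω, (P[(fun ω => if Y ω ≤ t then (1:ℝ) else 0)|(MeasurableSpace.comap PcZ (inferInstance : MeasurableSpace (EuclideanSpace ℝ (Fin p))))]) ω • (Z ω - PcZ ω) ∂P := by
      apply PiLp.ext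
      intro i
      have e1 := (EuclideanSpace.proj (𝕜 := ℝ) i).integral_comp_comm hFV_int
      have e2 := (EuclideanSpace.proj (𝕜 := ℝ) i).integral_comp_comm hhV_int
      have e1' : (∫ ω, (if Y ω ≤ t then (1:ℝ) else 0) • (Z ω - PcZ ω) ∂P) i
          = ∫ ω, (if Y ω ≤ t then (1:ℝ) else 0) * (Z ω i - PcZ ω i) ∂P := by
        simpa [smul_eq_mul, apply_ite (fun v : EuclideanSpace ℝ (Fin p) => v i)] using e1.symm
      have e2' : (∫ ω, (P[(fun ω => if Y ω ≤ t then (1:ℝ) else 0)|(MeasurableSpace.comap PcZ (inferInstance : MeasurableSpace (EuclideanSpace ℝ (Fin p))))]) ω • (Z ω - PcZ ω) ∂P) i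
          = ∫ ω, (P[(fun ω => if Y ω ≤ t then (1:ℝ) else 0)|(MeasurableSpace.comap PcZ (inferInstance : MeasurableSpace (EuclideanSpace ℝ (Fin p))))]) ω * (Z ω i - PcZ ω i) ∂P := by
        simpa [smul_eq_mul, apply_ite (fun v : EuclideanSpace ℝ (Fin p) => v i)] using e2.symm
      rw [e1', e2']
      -- real-valued identity via the tower property over σ(Z)
      have hVi_sm : StronglyMeasurable[(MeasurableSpace.comap Z (inferInstance : MeasurableSpace (EuclideanSpace ℝ (Fin p))))] (fun ω => Z ω i - PcZ ω i) := by
        have hPmZ : Measurable[(MeasurableSpace.comap Z (inferInstance : MeasurableSpace (EuclideanSpace ℝ (Fin p))))] PcZ := by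
          rw [hPcZfun]
          exact (ContinuousLinearMap.continuous _).measurable.comp hmZ_meas_Z
        exact ((((EuclideanSpace.proj (𝕜 := ℝ) i).continuous.measurable).comp hmZ_meas_Z).sub
          (((EuclideanSpace.proj (𝕜 := ℝ) i).continuous.measurable).comp hPmZ)).stronglyMeasurable
      have hViF_int : Integrable (fun ω => (Z ω i - PcZ ω i) * (if Y ω ≤ t then (1:ℝ) else 0)) P := by
        refine Integrable.mono' (hZ1.norm.add hZ1.norm)
          ((((hZi_meas i).sub (hPcZi_meas i)).mul (hFmeas t)).aestronglyMeasurable) ?_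
        refine ae_of_all _ fun ω => ?_
        rw [Real.norm_eq_abs, abs_mul]
        calc |Z ω i - PcZ ω i| * |if Y ω ≤ t then (1:ℝ) else 0|
            ≤ (‖Z ω‖ + ‖Z ω‖) * 1 := by
              refine mul_le_mul ?_ (hFabs ω) (abs_nonneg _) (by positivity)
              refine (abs_sub _ _).trans ?_
              gcongr
              exacts [coord_le (Z ω) i, (coord_le (PcZ ω) i).trans (hPcZ_nle ω)]
          _ = ‖Z ω‖ + ‖Z ω‖ := mul_one _
      have hpull := condExp_mul_of_stronglyMeasurable_left hVi_sm hViF_int hFint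
      calc ∫ ω, (if Y ω ≤ t then (1:ℝ) else 0) * (Z ω i - PcZ ω i) ∂P
          = ∫ ω, (Z ω i - PcZ ω i) * (if Y ω ≤ t then (1:ℝ) else 0) ∂P := by
            simp_rw [mul_comm]
        _ = ∫ ω, (P[(fun ω => (Z ω i - PcZ ω i) * (if Y ω ≤ t then (1:ℝ) else 0))|(MeasurableSpace.comap Z (inferInstance : MeasurableSpace (EuclideanSpace ℝ (Fin p))))]) ω ∂P :=
            (integral_condExp hmZle).symm
        _ = ∫ ω, (P[(fun ω => if Y ω ≤ t then (1:ℝ) else 0)|(MeasurableSpace.comap PcZ (inferInstance : MeasurableSpace (EuclideanSpace ℝ (Fin p))))]) ω * (Z ω i - PcZ ω i) ∂P := by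
            refine integral_congr_ae (hpull.trans ?_)
            filter_upwards [hcond] with ω hω
            simp only [Pi.mul_apply]
            rw [hω, mul_comm]
    have hsplit : (fun ω => if Y ω ≤ t then Z ω else 0)
        = fun ω => (if Y ω ≤ t then (1:ℝ) else 0) • Z ω := funext fun ω => by
      by_cases h : Y ω ≤ t <;> simp [h]
    rw [hsplit]
    have hFZ_int : Integrable (fun ω => (if Y ω ≤ t then (1:ℝ) else 0) • Z ω) P := by
      refine Integrable.mono' hZ1.norm
        (((hFmeas t).aestronglyMeasurable).smul hZae) (ae_of_all _ fun ω => ?_)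
      rw [norm_smul, Real.norm_eq_abs]
      simpa using mul_le_mul (hFabs ω) le_rfl (norm_nonneg _) zero_le_one
    have hFP_int : Integrable (fun ω => (if Y ω ≤ t then (1:ℝ) else 0) • PcZ ω) P := by
      refine Integrable.mono' hZ1.norm
        (((hFmeas t).aestronglyMeasurable).smul hPcZmeas.aestronglyMeasurable)
        (ae_of_all _ fun ω => ?_)
      rw [norm_smul, Real.norm_eq_abs]
      calc _ ≤ 1 * ‖PcZ ω‖ := mul_le_mul (hFabs ω) le_rfl (norm_nonneg _) zero_le_one
        _ ≤ ‖Z ω‖ := by rw [one_mul]; exact hPcZ_nle ω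
    have hdecomp : ∫ ω, (if Y ω ≤ t then (1:ℝ) else 0) • Z ω ∂P
        = (∫ ω, (if Y ω ≤ t then (1:ℝ) else 0) • PcZ ω ∂P)
          + ∫ ω, (if Y ω ≤ t then (1:ℝ) else 0) • (Z ω - PcZ ω) ∂P := by
      rw [← integral_add hFP_int hFV_int]
      congr 1
      funext ω
      rw [smul_sub]
      abel
    rw [hdecomp, hFVeq, hkey0, add_zero]
    -- the remaining integral lies in 
    have hφae : AEStronglyMeasurable
        (fun ω => (if Y ω ≤ t then (1:ℝ) else 0) • E_c.orthogonalProjectionOnto (Z ω)) P :=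
      ((hFmeas t).aestronglyMeasurable).smul
        (E_c.orthogonalProjectionOnto.continuous.comp_aestronglyMeasurable hZae)
    have hφint : Integrable
        (fun ω => (if Y ω ≤ t then (1:ℝ) else 0) • E_c.orthogonalProjectionOnto (Z ω)) P := by
      refine Integrable.mono' hZ1.norm hφae (ae_of_all _ fun ω => ?_)
      rw [norm_smul, Real.norm_eq_abs]
      calc _ ≤ 1 * ‖E_c.orthogonalProjectionOnto (Z ω)‖ :=
            mul_le_mul (hFabs ω) le_rfl (norm_nonneg _) zero_le_one
        _ ≤ ‖Z ω‖ := by rw [one_mul]; exact hproj_le (Z ω)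
    have hcomm := E_c.subtypeL.integral_comp_comm hφint
    have hrw : ∫ ω, (if Y ω ≤ t then (1:ℝ) else 0) • PcZ ω ∂P
        = E_c.subtypeL (∫ ω, (if Y ω ≤ t then (1:ℝ) else 0) • E_c.orthogonalProjectionOnto (Z ω) ∂P) := by
      rw [← hcomm]
      congr 1
      funext ω
      simp [hPcZ ω, apply_ite (fun x : E_c => (x : EuclideanSpace ℝ (Fin p)))]
    rw [hrw]
    simpa using (∫ ω, (if Y ω ≤ t then (1:ℝ) else 0) • E_c.orthogonalProjectionOnto (Z ω) ∂P).2
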